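/- For every integer t ≥ 2, the identity ζ_t(0|z) + ζ_{t−1}(0|z) = −(ζ_{t−1}(0))(B)(z) holds in ℚ[z], where for a polynomial f(z) = Σ_n a_n z^n one defines f(B)(z) := Σ_n a_n · B_{n+1}(z)/(n+1) (the ℚ-linear map sending z^n to B_{n+1}(z)/(n+1)), and ζ_m(0|z) denotes the depth-m normalized multiple Bernoulli polynomial with all entries zero. -/

import Mathlib

open Polynomial

/-- Auxiliary: normalized multiple Bernoulli polynomial of the reversed tuple,
defined by the recursion of the paper (acting on the last two entries, which are
at the front of the reversed list). -/
noncomputable def nmbpRev : List ℕ → ℚ[X]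
  | [] => 1
  | [k] => -(C ((k + 1 : ℚ)⁻¹)) * Polynomial.bernoulli (k + 1)
  | kr :: km :: rest =>
      -(C ((kr + 1 : ℚ)⁻¹)) * nmbpRev ((km + kr + 1) :: rest)
        - C (1 / 2 : ℚ) * nmbpRev ((km + kr) :: rest)
        + ∑ q ∈ Finset.Icc 1 kr,
            C ((ascPochhammer ℚ q).eval (-(kr : ℚ))
                * _root_.bernoulli (q + 1) / ((q + 1).factorial : ℚ)) *
              nmbpRev ((km + kr - q) :: rest)
  termination_by l => l.length
  decreasing_by all_goals simp

/-- The normalized multiple Bernoulli polynomial `ζ(−k₁,…,−k_r|z) ∈ ℚ[z]`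
(the empty tuple gives the constant polynomial `1`). -/
noncomputable def nmbp (l : List ℕ) : ℚ[X] := nmbpRev l.reverse
/-- The `ℚ`-linear transform `f(z) = Σ_n a_n z^n ↦ f(B)(z) := Σ_n a_n·B_{n+1}(z)/(n+1)`
sending `z^n` to `B_{n+1}(z)/(n+1)`. -/
noncomputable def bernoulliTransform (f : ℚ[X]) : ℚ[X] :=
  f.sum fun n a => C (a * ((n : ℚ) + 1)⁻¹) * Polynomial.bernoulli (n + 1)

/-!
A polynomial is determined by its forward difference `Δp(z) = p(z+1) - p(z)` and its integral
over `[0, 1]`, and `f(B)` is the one with `Δ(f(B)) = f` and integral `0`. The recursion makes every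
`ζ(-k₁,…,-k_r|z)` with `r ≥ 1` integrate to `0` and satisfy
`Δζ(-k₁,…,-k_r|z) = -z^{k₁} ζ(-k₂,…,-k_r|z+1)`. This is proved for all tuples at once after
extending the last entry linearly to polynomials (`z^j ↦ ζ(…,-j|z)`): in that form the recursion
reads `ζ(…,-a,-j|z) = ζ(…, z^a ζ(-j|z+1) | z)`, since `ζ(-j|z+1)` expands into exactly the
coefficients of the recursion. For the all-zero tuples `Z_m = ζ_m(0|z)` the difference equation
gives `Δ(Z_{m+1} + Z_m) = -Z_m` by induction on `m`, and the theorem follows by uniqueness.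
-/

open Finset

section FwdDiff

variable {R : Type*} [CommRing R]

noncomputable def polyFwdDiff : R[X] →ₗ[R] R[X] := taylor 1 - LinearMap.id

lemma polyFwdDiff_apply (p : R[X]) : polyFwdDiff p = p.comp (X + 1) - p := by
  simp [polyFwdDiff, taylor_apply]

lemma comp_X_add_one_eq_add_polyFwdDiff (p : R[X]) : p.comp (X + 1) = p + polyFwdDiff p := by
  rw [polyFwdDiff_apply, add_sub_cancel]

lemma polyFwdDiff_C (c : R) : polyFwdDiff (C c) = 0 := by
  rw [polyFwdDiff_apply, C_comp, sub_self]

lemma eq_C_of_polyFwdDiff_eq_zero [IsDomain R] [CharZero R] {p : R[X]}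
    (h : polyFwdDiff p = 0) : p = C (p.eval 0) := by
  have hshift (x : R) : p.eval (x + 1) = p.eval x := by
    simpa [polyFwdDiff_apply, sub_eq_zero] using congr_arg (eval x) h
  have hnat (n : ℕ) : p.eval (n : R) = p.eval 0 := by
    induction n with
    | zero => simp
    | succ n ih => rw [Nat.cast_succ, hshift, ih]
  refine sub_eq_zero.mp (eq_zero_of_infinite_isRoot _ ?_)
  refine Set.infinite_of_injective_forall_mem Nat.cast_injective fun n => ?_
  simp [hnat]

end FwdDiff

section UnitIntegral

variable {K : Type*} [Field K]

noncomputable def unitIntegral : K[X] →ₗ[K] K := lsum fun n => ((n : K) + 1)⁻¹ • LinearMap.id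

lemma unitIntegral_monomial (n : ℕ) (a : K) :
    unitIntegral (monomial n a) = ((n : K) + 1)⁻¹ * a := by
  simp [unitIntegral]

lemma unitIntegral_C (a : K) : unitIntegral (C a) = a := by
  simpa using unitIntegral_monomial 0 a

lemma unitIntegral_derivative [CharZero K] (p : K[X]) :
    unitIntegral (derivative p) = p.eval 1 - p.eval 0 := by
  induction p using Polynomial.induction_on' with
  | add p q hp hq => simp only [map_add, hp, hq, eval_add]; ring
  | monomial n a =>
    cases n with
    | zero => simp
    | succ n =>
      rw [derivative_monomial, unitIntegral_monomial]
      field_simp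
      simp [mul_comm]

lemma eq_of_polyFwdDiff_eq_of_unitIntegral_eq [CharZero K] {p q : K[X]}
    (hΔ : polyFwdDiff p = polyFwdDiff q) (hI : unitIntegral p = unitIntegral q) : p = q := by
  have hconst := eq_C_of_polyFwdDiff_eq_zero (p := p - q) (by rw [map_sub, hΔ, sub_self])
  have hzero : (p - q).eval 0 = 0 := by
    rw [← unitIntegral_C ((p - q).eval 0), ← hconst, map_sub, hI, sub_self]
  rwa [hzero, C_0, sub_eq_zero] at hconst

end UnitIntegral

lemma polyFwdDiff_bernoulli (n : ℕ) : polyFwdDiff (bernoulli n) = n • X ^ (n - 1) := by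
  rw [polyFwdDiff_apply, add_comm, bernoulli_comp_one_add_X, add_sub_cancel_left]

lemma unitIntegral_bernoulli_succ (n : ℕ) : unitIntegral (bernoulli (n + 1)) = 0 := by
  have h := unitIntegral_derivative (bernoulli (n + 2))
  rw [derivative_bernoulli_add_one, bernoulli_eval_one, bernoulli_eval_zero,
    bernoulli_eq_bernoulli'_of_ne_one (by omega), sub_self,
    show ((n + 1 : ℕ) : ℚ[X]) + 1 = ((n + 2 : ℕ) : ℚ[X]) by push_cast; ring,
    ← nsmul_eq_mul, map_nsmul, smul_eq_zero] at h
  exact h.resolve_left (by omega)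

noncomputable def nmbpCoeff (k q : ℕ) : ℚ :=
  (ascPochhammer ℚ q).eval (-(k : ℚ)) * _root_.bernoulli (q + 1) / ((q + 1).factorial : ℚ)

lemma nmbpRev_singleton (k : ℕ) :
    nmbpRev [k] = -C ((k + 1 : ℚ)⁻¹) * Polynomial.bernoulli (k + 1) := by
  rw [nmbpRev]

lemma nmbpRev_cons_cons (j a : ℕ) (l : List ℕ) :
    nmbpRev (j :: a :: l) =
      -C ((j + 1 : ℚ)⁻¹) * nmbpRev ((a + j + 1) :: l) - C (1 / 2 : ℚ) * nmbpRev ((a + j) :: l)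
        + ∑ q ∈ Icc 1 j, C (nmbpCoeff j q) * nmbpRev ((a + j - q) :: l) := by
  rw [nmbpRev]; rfl

lemma polyFwdDiff_nmbpRev_singleton (k : ℕ) : polyFwdDiff (nmbpRev [k]) = -X ^ k := by
  rw [nmbpRev_singleton, neg_mul, ← smul_eq_C_mul, map_neg, map_smul, polyFwdDiff_bernoulli,
    Nat.add_sub_cancel, ← Nat.cast_smul_eq_nsmul ℚ, smul_smul, Nat.cast_succ,
    inv_mul_cancel₀ (by positivity), one_smul]

lemma unitIntegral_nmbpRev_singleton (k : ℕ) : unitIntegral (nmbpRev [k]) = 0 := by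
  rw [nmbpRev_singleton, neg_mul, ← smul_eq_C_mul, map_neg, map_smul, unitIntegral_bernoulli_succ,
    smul_zero, neg_zero]

lemma mul_nmbpCoeff {k q : ℕ} (hq : 1 ≤ q) :
    (k + 1 : ℚ) * nmbpCoeff k q = -((k + 1).choose (q + 1) * _root_.bernoulli (q + 1)) := by
  rw [nmbpCoeff, ascPochhammer_eval_neg_eq_descPochhammer, descPochhammer_eval_eq_descFactorial]
  rcases Nat.even_or_odd q with heven | hodd
  · have hB : _root_.bernoulli (q + 1) = 0 := by
      rw [bernoulli_eq_bernoulli'_of_ne_one (by omega)]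
      exact bernoulli'_eq_zero_of_odd heven.add_one (by obtain ⟨r, hr⟩ := heven; omega)
    simp [hB]
  · have hchoose :
        ((k : ℚ) + 1) * k.descFactorial q = (q + 1).factorial * (k + 1).choose (q + 1) := by
      norm_cast
      rw [← Nat.succ_descFactorial_succ, Nat.descFactorial_eq_factorial_mul_choose]
    rw [hodd.neg_one_pow]
    field_simp
    linear_combination (-_root_.bernoulli (q + 1)) * hchoose

lemma Polynomial.bernoulli_succ_eq_sum_Icc (k : ℕ) :
    Polynomial.bernoulli (k + 1) = X ^ (k + 1) - C (1 / 2 : ℚ) * (k + 1 : ℚ[X]) * X ^ k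
      + ∑ q ∈ Icc 1 k, monomial (k - q) (_root_.bernoulli (q + 1) * (k + 1).choose (q + 1)) := by
  rw [Polynomial.bernoulli, sum_range_succ', sum_range_succ', range_eq_Ico]
  simp only [Nat.add_sub_add_right]
  rw [sum_Ico_add' (fun i => monomial (k - i) (_root_.bernoulli (i + 1) * (k + 1).choose (i + 1)))
    0 k 1, zero_add, Ico_add_one_right_eq_Icc]
  simp only [_root_.bernoulli_zero, _root_.bernoulli_one, Nat.choose_zero_right,
    Nat.choose_one_right, Nat.sub_zero, ← C_mul_X_pow_eq_monomial, neg_div, map_neg, map_mul,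
    map_add, map_one, map_natCast, Nat.cast_add, Nat.cast_one]
  ring

lemma nmbpRev_singleton_eq_sum (k : ℕ) :
    nmbpRev [k] = -C ((k + 1 : ℚ)⁻¹) * X ^ (k + 1) + C (1 / 2 : ℚ) * X ^ k
      + ∑ q ∈ Icc 1 k, C (nmbpCoeff k q) * X ^ (k - q) := by
  have hsum : -C ((k + 1 : ℚ)⁻¹) *
        ∑ q ∈ Icc 1 k, monomial (k - q) (_root_.bernoulli (q + 1) * (k + 1).choose (q + 1))
      = ∑ q ∈ Icc 1 k, C (nmbpCoeff k q) * X ^ (k - q) := by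
    rw [mul_sum]
    refine sum_congr rfl fun q hq => ?_
    rw [← C_mul_X_pow_eq_monomial, ← mul_assoc, ← map_neg, ← map_mul]
    congr 2
    have := mul_nmbpCoeff (k := k) (mem_Icc.mp hq).1
    field_simp
    linear_combination -this
  have hunit : C ((k + 1 : ℚ)⁻¹) * (k + 1) = 1 := by
    rw [← map_natCast C, ← map_one C, ← map_add, ← map_mul, inv_mul_cancel₀ (by positivity)]
  rw [nmbpRev_singleton, bernoulli_succ_eq_sum_Icc, ← hsum]
  linear_combination (C (1 / 2 : ℚ) * X ^ k) * hunit

lemma nmbpRev_singleton_comp_X_add_one (k : ℕ) :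
    (nmbpRev [k]).comp (X + 1) = -C ((k + 1 : ℚ)⁻¹) * X ^ (k + 1) - C (1 / 2 : ℚ) * X ^ k
      + ∑ q ∈ Icc 1 k, C (nmbpCoeff k q) * X ^ (k - q) := by
  have hhalf : C (1 / 2 : ℚ) * 2 = 1 := by
    rw [← map_ofNat C 2, ← map_mul, one_div_mul_cancel two_ne_zero, map_one]
  rw [comp_X_add_one_eq_add_polyFwdDiff, polyFwdDiff_nmbpRev_singleton, nmbpRev_singleton_eq_sum]
  linear_combination X ^ k * hhalf

/-- For the reversed tuple `l = [k_r, …, k₁]`, `nmbpRevLin l` is `ζ(-k₁,…,-k_r, ·)` with the new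
last entry extended linearly from `X ^ j ↦ ζ(-k₁,…,-k_r,-j|z)`. -/
noncomputable def nmbpRevLin (l : List ℕ) : ℚ[X] →ₗ[ℚ] ℚ[X] :=
  lsum fun j => LinearMap.toSpanSingleton ℚ ℚ[X] (nmbpRev (j :: l))

lemma nmbpRevLin_C_mul_X_pow (l : List ℕ) (j : ℕ) (c : ℚ) :
    nmbpRevLin l (C c * X ^ j) = C c * nmbpRev (j :: l) := by
  simp [nmbpRevLin, C_mul_X_pow_eq_monomial, smul_eq_C_mul]

lemma nmbpRevLin_X_pow (l : List ℕ) (j : ℕ) : nmbpRevLin l (X ^ j) = nmbpRev (j :: l) := by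
  simpa using nmbpRevLin_C_mul_X_pow l j 1

lemma nmbpRev_cons_cons_eq_nmbpRevLin (j a : ℕ) (l : List ℕ) :
    nmbpRev (j :: a :: l) = nmbpRevLin l (X ^ a * (nmbpRev [j]).comp (X + 1)) := by
  have hterm (c : ℚ) (n : ℕ) :
      nmbpRevLin l (X ^ a * (C c * X ^ n)) = C c * nmbpRev ((a + n) :: l) := by
    rw [mul_left_comm, ← pow_add, nmbpRevLin_C_mul_X_pow]
  rw [nmbpRev_singleton_comp_X_add_one, nmbpRev_cons_cons]
  simp only [mul_add, mul_sub, mul_sum, neg_mul, mul_neg, map_add, map_sub, map_neg, map_sum,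
    hterm, add_assoc]
  congr 1
  refine sum_congr rfl fun q hq => ?_
  rw [Nat.add_sub_assoc (mem_Icc.mp hq).2]

lemma polyFwdDiff_nmbpRevLin_nil (f : ℚ[X]) : polyFwdDiff (nmbpRevLin [] f) = -f := by
  induction f using Polynomial.induction_on' with
  | add p q hp hq => rw [map_add, map_add, hp, hq, neg_add]
  | monomial j c =>
    rw [← smul_X_eq_monomial, map_smul, map_smul, nmbpRevLin_X_pow, polyFwdDiff_nmbpRev_singleton,
      smul_neg]

lemma polyFwdDiff_nmbpRevLin_append (l : List ℕ) (k : ℕ) (f : ℚ[X]) :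
    polyFwdDiff (nmbpRevLin (l ++ [k]) f) = -X ^ k * (nmbpRevLin l f).comp (X + 1) := by
  induction f using Polynomial.induction_on' with
  | add p q hp hq => rw [map_add, map_add, hp, hq, map_add, add_comp, mul_add]
  | monomial j c =>
    rw [← smul_X_eq_monomial, map_smul, map_smul, map_smul, smul_comp, mul_smul_comm,
      nmbpRevLin_X_pow, nmbpRevLin_X_pow]
    congr 1
    cases l with
    | nil =>
      rw [List.nil_append, nmbpRev_cons_cons_eq_nmbpRevLin, polyFwdDiff_nmbpRevLin_nil, neg_mul]
    | cons a l =>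
      rw [List.cons_append, nmbpRev_cons_cons_eq_nmbpRevLin, polyFwdDiff_nmbpRevLin_append l k,
        nmbpRev_cons_cons_eq_nmbpRevLin]

lemma unitIntegral_nmbpRevLin (l : List ℕ) (f : ℚ[X]) : unitIntegral (nmbpRevLin l f) = 0 := by
  induction f using Polynomial.induction_on' with
  | add p q hp hq => rw [map_add, map_add, hp, hq, add_zero]
  | monomial j c =>
    rw [← smul_X_eq_monomial, map_smul, map_smul, nmbpRevLin_X_pow, smul_eq_zero]
    right
    cases l with
    | nil => exact unitIntegral_nmbpRev_singleton j
    | cons a l => rw [nmbpRev_cons_cons_eq_nmbpRevLin, unitIntegral_nmbpRevLin l]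

lemma nmbp_nil : nmbp [] = 1 := by
  rw [nmbp, List.reverse_nil, nmbpRev]

lemma polyFwdDiff_nmbp_cons (k : ℕ) (l : List ℕ) :
    polyFwdDiff (nmbp (k :: l)) = -X ^ k * (nmbp l).comp (X + 1) := by
  rw [nmbp, nmbp, List.reverse_cons]
  cases l.reverse with
  | nil => rw [List.nil_append, polyFwdDiff_nmbpRev_singleton, nmbpRev, one_comp, mul_one]
  | cons j l => rw [List.cons_append, ← nmbpRevLin_X_pow, polyFwdDiff_nmbpRevLin_append,
      nmbpRevLin_X_pow]

lemma unitIntegral_nmbp {l : List ℕ} (hl : l ≠ []) : unitIntegral (nmbp l) = 0 := by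
  obtain ⟨j, l', hl'⟩ := List.exists_cons_of_ne_nil (List.reverse_ne_nil_iff.mpr hl)
  rw [nmbp, hl', ← nmbpRevLin_X_pow, unitIntegral_nmbpRevLin]

lemma bernoulliTransform_eq_neg_nmbpRevLin_nil (f : ℚ[X]) :
    bernoulliTransform f = -nmbpRevLin [] f := by
  rw [bernoulliTransform, nmbpRevLin, lsum_apply, sum_def, sum_def, ← sum_neg_distrib]
  refine sum_congr rfl fun n _ => ?_
  rw [LinearMap.toSpanSingleton_apply, nmbpRev_singleton, smul_eq_C_mul, C_mul]
  ring

lemma polyFwdDiff_nmbp_replicate_succ_add (n : ℕ) :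
    polyFwdDiff (nmbp (List.replicate (n + 1) 0) + nmbp (List.replicate n 0))
      = -nmbp (List.replicate n 0) := by
  induction n with
  | zero =>
    rw [List.replicate_zero, nmbp_nil, map_add, List.replicate_one, polyFwdDiff_nmbp_cons, nmbp_nil,
      ← C_1, polyFwdDiff_C, C_comp]
    ring
  | succ n ih =>
    have hshift := comp_X_add_one_eq_add_polyFwdDiff
      (nmbp (List.replicate (n + 1) 0) + nmbp (List.replicate n 0))
    rw [ih, add_comp] at hshift
    rw [map_add, show List.replicate (n + 2) 0 = 0 :: List.replicate (n + 1) 0 from rfl,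
      polyFwdDiff_nmbp_cons, List.replicate_succ, polyFwdDiff_nmbp_cons, ← List.replicate_succ]
    linear_combination -hshift

/-- For `t ≥ 2`: `ζ_t(0|z) + ζ_{t−1}(0|z) = −(ζ_{t−1}(0))(B)(z)` in `ℚ[z]`. -/
theorem nmbp_replicate_zero_bernoulli_transform (t : ℕ) (ht : 2 ≤ t) :
    nmbp (List.replicate t 0) + nmbp (List.replicate (t - 1) 0)
      = -bernoulliTransform (nmbp (List.replicate (t - 1) 0)) := by
  obtain ⟨n, rfl⟩ : ∃ n, t = n + 2 := ⟨t - 2, by omega⟩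
  rw [show n + 2 - 1 = n + 1 from rfl, bernoulliTransform_eq_neg_nmbpRevLin_nil, neg_neg]
  apply eq_of_polyFwdDiff_eq_of_unitIntegral_eq
  · rw [polyFwdDiff_nmbp_replicate_succ_add, polyFwdDiff_nmbpRevLin_nil]
  · rw [map_add, unitIntegral_nmbp, unitIntegral_nmbp, unitIntegral_nmbpRevLin, add_zero] <;> simp
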